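/- arXiv:math/0511489 — 5 statements merged into one kernel-verified Lean document; each statement's English description precedes it below -/
import Mathlib

section
/- Let G be a group acting on an associative unital ℂ-algebra A by algebra automorphisms a ↦ a^g, let S be a subgroup of G whose image under an embedding ε : S → G is normal in G, and let a : S → A be a multiplicative map (a(1) = 1, a(ss') = a(s)a(s')) with each a(s) invertible, satisfying a(s)^g = a(g s g^{-1}) and a(s)·x·a(s^{-1}) = x^{ε(s)} for all s ∈ S, g ∈ G, x ∈ A. Then the left ideal of the smash product A ⋊ G generated by the elements a(s) ⋊ 1 − 1 ⋊ ε(s), s ∈ S, is a two-sided ideal. -/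
/-- Equalizer smash product: if `G` acts on `A` by algebra automorphisms, `S`
embeds into `G` via `ε` with normal image, and `a : S → A` is a multiplicative
map with invertible values satisfying `a(s)^g = a(g s g⁻¹)` and
`a(s)·x·a(s⁻¹) = x^{ε(s)}`, then in the smash product `B = A ⋊ G`
(presented by structure maps `ι : A → B`, `u : G → Bˣ` with
`u(g)·ι(x) = ι(x^g)·u(g)` and `B` spanned by the elements `ι(x)·u(g)`),
the left ideal generated by the elements `ι(a(s)) − u(ε(s))` is a two-sided
ideal. -/
theorem equalizer_smash_product_two_sided
    {A : Type*} [Ring A] [Algebra ℂ A]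
    {G : Type*} [Group G] [MulSemiringAction G A]
    {S : Type*} [Group S] (ε : S →* G)
    (hinj : Function.Injective ε)
    (hnormal : ∀ (g : G) (s : S), ∃ s' : S, g * ε s * g⁻¹ = ε s')
    (aa : S → A) (h1 : aa 1 = 1) (hmul : ∀ s s' : S, aa (s * s') = aa s * aa s')
    (hunit : ∀ s : S, IsUnit (aa s))
    (hequiv : ∀ (g : G) (s s' : S), ε s' = g * ε s * g⁻¹ → g • aa s = aa s')
    (hconj : ∀ (s : S) (x : A), aa s * x * aa s⁻¹ = (ε s) • x)
    {B : Type*} [Ring B] [Algebra ℂ B]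
    (ι : A →ₐ[ℂ] B) (u : G →* Bˣ)
    (hcov : ∀ (g : G) (x : A), (u g : B) * ι x = ι (g • x) * (u g : B))
    (hspan : Submodule.span ℂ {b : B | ∃ (x : A) (g : G), b = ι x * (u g : B)} = ⊤)
    (T : Submodule B B)
    (hT : T = Submodule.span B {b : B | ∃ s : S, b = ι (aa s) - (u (ε s) : B)}) :
    ∀ z ∈ T, ∀ b : B, z * b ∈ T := by
  subst hT
  set Gen : Set B := {b : B | ∃ s : S, b = ι (aa s) - (u (ε s) : B)} with hGen
  -- key computation: a generator times a basic element lands back in the span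
  have key : ∀ (s : S) (x : A) (g : G),
      (ι (aa s) - (u (ε s) : B)) * (ι x * (u g : B)) ∈ Submodule.span B Gen := by
    intro s x g
    obtain ⟨s', hs'⟩ := hnormal g⁻¹ s
    have hgs : g • aa s' = aa s := by
      refine hequiv g s' s ?_
      rw [← hs']; group
    have hinvm : aa s⁻¹ * aa s = 1 := by
      rw [← hmul, inv_mul_cancel, h1]
    have hc : (ε s • x) * aa s = aa s * x := by
      rw [← hconj, mul_assoc, hinvm, mul_one]
    have hg : ε s * g = g * ε s' := by
      rw [← hs']; group
    have heq : (ι (aa s) - (u (ε s) : B)) * (ι x * (u g : B)) =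
        (ι (ε s • x) * (u g : B)) * (ι (aa s') - (u (ε s') : B)) := by
      rw [sub_mul, mul_sub]
      congr 1
      · rw [mul_assoc, hcov g (aa s'), ← mul_assoc, ← map_mul, hgs,
          ← mul_assoc, ← map_mul, hc]
      · rw [← mul_assoc, hcov (ε s) x, mul_assoc, mul_assoc, ← Units.val_mul,
          ← map_mul, hg, map_mul, Units.val_mul]
    rw [heq, ← smul_eq_mul]
    exact Submodule.smul_mem _ _ (Submodule.subset_span ⟨s', rfl⟩)
  -- extend to all b by the spanning assumption
  have main : ∀ (b : B) (s : S),
      (ι (aa s) - (u (ε s) : B)) * b ∈ Submodule.span B Gen := by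
    intro b
    have hb : b ∈ Submodule.span ℂ {b : B | ∃ (x : A) (g : G), b = ι x * (u g : B)} := by
      rw [hspan]; trivial
    induction hb using Submodule.span_induction with
    | mem b hb =>
      obtain ⟨x, g, rfl⟩ := hb
      exact fun s => key s x g
    | zero => intro s; simp
    | add x y _ _ hx hy =>
      intro s; rw [mul_add]; exact add_mem (hx s) (hy s)
    | smul c x _ hx =>
      intro s
      rw [mul_smul_comm, Algebra.smul_def, ← smul_eq_mul]
      exact Submodule.smul_mem _ _ (hx s)
  intro z hz b
  induction hz using Submodule.span_induction with
  | mem d hd =>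
    obtain ⟨s, rfl⟩ := hd
    exact main b s
  | zero => simp
  | add x y _ _ hx hy => rw [add_mul]; exact add_mem hx hy
  | smul c x _ hx =>
    rw [smul_mul_assoc]
    exact Submodule.smul_mem _ _ hx
end

section
/- Let A be a unital associative ℂ-algebra and n ≥ 1. Then the algebra of S_n-invariants (A^{⊗n})^{S_n} is generated as an algebra by the elements Σ_{p=1}^n 1^{⊗(p-1)} ⊗ X ⊗ 1^{⊗(n-p)} for X ∈ A. -/
open scoped TensorProduct
open PiTensorProduct

section SymmAux

variable {A : Type*} [Ring A] [Algebra ℂ A] {n k : ℕ}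

omit [Algebra ℂ A] in
private lemma aux_snoc_inj {f : Fin k → Fin n} (hf : Function.Injective f) {p : Fin n}
    (hp : p ∉ Set.range f) : Function.Injective (Fin.snoc f p : Fin (k+1) → Fin n) := by
  intro i j hij
  rcases Fin.eq_castSucc_or_eq_last i with ⟨i', rfl⟩ | rfl <;>
    rcases Fin.eq_castSucc_or_eq_last j with ⟨j', rfl⟩ | rfl <;>
      simp only [Fin.snoc_castSucc, Fin.snoc_last] at hij
  · exact congrArg Fin.castSucc (hf hij)
  · exact absurd ⟨i', hij⟩ hp
  · exact absurd ⟨j', hij.symm⟩ hp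
  · rfl

private def auxInjFinset (n k : ℕ) : Finset (Fin k → Fin n) :=
  Finset.univ.filter Function.Injective

omit [Algebra ℂ A] in
private lemma mem_auxInjFinset {k : ℕ} {f : Fin k → Fin n} :
    f ∈ auxInjFinset n k ↔ Function.Injective f := by
  simp [auxInjFinset]

variable (A n) in
/-- Sum over all injective placements of the tuple `a` into `n` tensor slots. -/
private noncomputable def auxT (k : ℕ) (a : Fin k → A) : ⨂[ℂ] (_ : Fin n), A :=
  ∑ f ∈ auxInjFinset n k, tprod ℂ (Function.extend f a 1)

omit [Algebra ℂ A] in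
private lemma place_mul_notin (X : A) (f : Fin k → Fin n) (hf : Function.Injective f)
    (a : Fin k → A) (p : Fin n) (hp : p ∉ Set.range f) :
    (Function.update (fun _ : Fin n => (1 : A)) p X) * Function.extend f a 1
      = Function.extend (Fin.snoc f p) (Fin.snoc a X) 1 := by
  have hsnoc := aux_snoc_inj hf hp
  funext q
  by_cases hq : ∃ i, f i = q
  · obtain ⟨i, rfl⟩ := hq
    have h1 : f i ≠ p := fun h => hp ⟨i, h⟩
    have : (Fin.snoc f p : Fin (k+1) → Fin n) (Fin.castSucc i) = f i := Fin.snoc_castSucc ..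
    rw [Pi.mul_apply, hf.extend_apply, ← this, hsnoc.extend_apply,
      Fin.snoc_castSucc, Function.update_of_ne h1]
    simp
  · by_cases hqp : q = p
    · have : (Fin.snoc f p : Fin (k+1) → Fin n) (Fin.last k) = q := by
        rw [Fin.snoc_last, hqp]
      rw [Pi.mul_apply, Function.extend_apply' _ _ _ hq, ← this, hsnoc.extend_apply,
        Fin.snoc_last, Function.update_self]
      simp
    · have hq' : ¬ ∃ i, (Fin.snoc f p : Fin (k+1) → Fin n) i = q := by
        rintro ⟨i, rfl⟩
        rcases Fin.eq_castSucc_or_eq_last i with ⟨i', rfl⟩ | rfl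
        · exact hq ⟨i', by simp⟩
        · exact hqp (by simp)
      rw [Pi.mul_apply, Function.extend_apply' _ _ _ hq, Function.extend_apply' _ _ _ hq',
        Function.update_of_ne hqp]
      simp

omit [Algebra ℂ A] in
private lemma place_mul_mem (X : A) (f : Fin k → Fin n) (hf : Function.Injective f)
    (a : Fin k → A) (j : Fin k) :
    (Function.update (fun _ : Fin n => (1 : A)) (f j) X) * Function.extend f a 1
      = Function.extend f (Function.update a j (X * a j)) 1 := by
  funext q
  by_cases hq : ∃ i, f i = q
  · obtain ⟨i, rfl⟩ := hq
    rw [Pi.mul_apply, hf.extend_apply, hf.extend_apply]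
    by_cases hij : i = j
    · subst hij; simp
    · rw [Function.update_of_ne (fun h => hij (hf h)), Function.update_of_ne hij, one_mul]
  · have hqp : f j ≠ q := fun h => hq ⟨j, h⟩
    rw [Pi.mul_apply, Function.extend_apply' _ _ _ hq, Function.extend_apply' _ _ _ hq,
      Function.update_of_ne (Ne.symm hqp)]
    simp

private lemma key_recursion (X : A) (a : Fin k → A) :
    (∑ p : Fin n, tprod ℂ (Function.update (fun _ : Fin n => (1 : A)) p X)) * auxT A n k a
      = auxT A n (k+1) (Fin.snoc a X)
        + ∑ j : Fin k, auxT A n k (Function.update a j (X * a j)) := by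
  rw [auxT, Finset.sum_mul_sum]
  have step : ∀ f ∈ auxInjFinset n k, ∀ p : Fin n,
      tprod ℂ (Function.update (fun _ : Fin n => (1 : A)) p X) *
        tprod ℂ (Function.extend f a 1)
      = tprod ℂ ((Function.update (fun _ : Fin n => (1 : A)) p X) * Function.extend f a 1) :=
    fun f _ p => tprod_mul_tprod _ _
  calc ∑ p : Fin n, ∑ f ∈ auxInjFinset n k,
        tprod ℂ (Function.update (fun _ : Fin n => (1 : A)) p X) *
          tprod ℂ (Function.extend f a 1)
      = ∑ f ∈ auxInjFinset n k, ∑ p : Fin n,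
        tprod ℂ ((Function.update (fun _ : Fin n => (1 : A)) p X) * Function.extend f a 1) := by
        rw [Finset.sum_comm]
        exact Finset.sum_congr rfl fun f hf => Finset.sum_congr rfl fun p _ => step f hf p
    _ = ∑ f ∈ auxInjFinset n k,
          ((∑ p ∈ (Finset.image f Finset.univ)ᶜ,
            tprod ℂ (Function.extend (Fin.snoc f p) (Fin.snoc a X) 1))
          + ∑ j : Fin k,
            tprod ℂ (Function.extend f (Function.update a j (X * a j)) 1)) := by
        refine Finset.sum_congr rfl fun f hf => ?_
        have hfi : Function.Injective f := mem_auxInjFinset.mp hf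
        rw [← Finset.sum_compl_add_sum (Finset.image f Finset.univ)]
        congr 1
        · refine Finset.sum_congr rfl fun p hp => ?_
          rw [place_mul_notin X f hfi a p]
          simp only [Finset.mem_compl, Finset.mem_image, Finset.mem_univ, true_and] at hp
          rintro ⟨i, rfl⟩; exact hp ⟨i, rfl⟩
        · rw [Finset.sum_image (fun i _ j _ h => hfi h)]
          exact Finset.sum_congr rfl fun j _ => by rw [place_mul_mem X f hfi a j]
    _ = auxT A n (k+1) (Fin.snoc a X)
          + ∑ j : Fin k, auxT A n k (Function.update a j (X * a j)) := by
        rw [Finset.sum_add_distrib, Finset.sum_comm]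
        congr 1
        · rw [Finset.sum_sigma']
          refine Finset.sum_nbij' (i := fun x => (Fin.snoc x.1 x.2 : Fin (k+1) → Fin n))
            (j := fun g => ⟨Fin.init g, g (Fin.last k)⟩) ?_ ?_ ?_ ?_ ?_
          · rintro ⟨f, p⟩ hx
            simp only [Finset.mem_sigma, Finset.mem_compl, Finset.mem_image, Finset.mem_univ,
              true_and] at hx
            refine mem_auxInjFinset.mpr (aux_snoc_inj (mem_auxInjFinset.mp hx.1) ?_)
            rintro ⟨i, rfl⟩; exact hx.2 ⟨i, rfl⟩
          · intro g hg
            have hgi : Function.Injective g := mem_auxInjFinset.mp hg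
            simp only [Finset.mem_sigma, Finset.mem_compl, Finset.mem_image, Finset.mem_univ,
              true_and]
            constructor
            · exact mem_auxInjFinset.mpr fun i j h => by
                have := hgi (show g i.castSucc = g j.castSucc from h)
                exact Fin.castSucc_injective _ this
            · rintro ⟨i, hi⟩
              exact (Fin.castSucc_lt_last i).ne (hgi hi)
          · rintro ⟨f, p⟩ hx
            simp [Fin.init_snoc]
          · intro g hg
            exact Fin.snoc_init_self g
          · rintro ⟨f, p⟩ hx
            rfl

private lemma auxT_zero (a : Fin 0 → A) : auxT A n 0 a = 1 := by
  rw [auxT, show (auxInjFinset n 0 : Finset (Fin 0 → Fin n))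
      = {fun i => i.elim0} from by
    ext f
    simp only [mem_auxInjFinset, Finset.mem_singleton]
    constructor
    · intro _; exact funext fun i => i.elim0
    · intro _; exact Function.injective_of_subsingleton f]
  rw [Finset.sum_singleton, one_def]
  congr 1
  funext q
  rw [Function.extend_apply' _ _ _ (by rintro ⟨i, -⟩; exact i.elim0)]

private lemma auxT_mem (k : ℕ) (a : Fin k → A) :
    auxT A n k a ∈ Algebra.adjoin ℂ
      {y : ⨂[ℂ] (_ : Fin n), A | ∃ X : A,
        y = ∑ p : Fin n,
          tprod ℂ (Function.update (fun _ : Fin n => (1 : A)) p X)} := by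
  induction k with
  | zero => rw [auxT_zero]; exact Subalgebra.one_mem _
  | succ k ih =>
    have hk := key_recursion (n := n) (a (Fin.last k)) (Fin.init a)
    rw [Fin.snoc_init_self] at hk
    have heq : auxT A n (k+1) a
        = (∑ p : Fin n, tprod ℂ (Function.update (fun _ : Fin n => (1 : A)) p
            (a (Fin.last k)))) * auxT A n k (Fin.init a)
          - ∑ j : Fin k, auxT A n k
              (Function.update (Fin.init a) j (a (Fin.last k) * Fin.init a j)) := by
      rw [hk]; abel
    rw [heq]
    refine sub_mem (mul_mem (Algebra.subset_adjoin ⟨a (Fin.last k), rfl⟩) (ih _)) ?_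
    exact Subalgebra.sum_mem _ fun j _ => ih _

private lemma sym_eq_auxT (f : Fin n → A) :
    ∑ σ : Equiv.Perm (Fin n), tprod ℂ (fun i => f (σ.symm i)) = auxT A n n f := by
  rw [auxT]
  refine Finset.sum_bij' (fun σ _ => (σ : Fin n → Fin n))
    (fun g hg => Equiv.ofBijective g
      ((Finite.injective_iff_bijective).mp (mem_auxInjFinset.mp hg)))
    (fun σ _ => mem_auxInjFinset.mpr σ.injective) (fun g hg => Finset.mem_univ _)
    (fun σ _ => by ext q; rfl) (fun g hg => rfl) ?_
  intro σ _
  congr 1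
  funext q
  conv_rhs => rw [show q = σ (σ.symm q) by simp]
  rw [σ.injective.extend_apply]

end SymmAux

/-- For a unital associative ℂ-algebra `A`, the algebra of `S_n`-invariants of
`A^{⊗n}` is generated by the symmetrized elements
`∑_{p=1}^n 1^{⊗(p-1)} ⊗ X ⊗ 1^{⊗(n-p)}`, `X ∈ A`. -/
theorem symmetric_invariants_generated
    (A : Type*) [Ring A] [Algebra ℂ A] (n : ℕ)
    (x : ⨂[ℂ] (_ : Fin n), A)
    (hx : ∀ σ : Equiv.Perm (Fin n),
      PiTensorProduct.reindex ℂ (fun _ : Fin n => A) σ x = x) :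
    x ∈ Algebra.adjoin ℂ
      {y : ⨂[ℂ] (_ : Fin n), A | ∃ X : A,
        y = ∑ p : Fin n,
          PiTensorProduct.tprod ℂ (Function.update (fun _ : Fin n => (1 : A)) p X)} := by
  set S : Set (⨂[ℂ] (_ : Fin n), A) :=
    {y : ⨂[ℂ] (_ : Fin n), A | ∃ X : A,
      y = ∑ p : Fin n,
        PiTensorProduct.tprod ℂ (Function.update (fun _ : Fin n => (1 : A)) p X)} with hS
  have sum_mem : ∀ y : ⨂[ℂ] (_ : Fin n), A,
      (∑ σ : Equiv.Perm (Fin n), PiTensorProduct.reindex ℂ (fun _ : Fin n => A) σ y)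
        ∈ Algebra.adjoin ℂ S := by
    intro y
    induction y using PiTensorProduct.induction_on with
    | smul_tprod r f =>
      have : (∑ σ : Equiv.Perm (Fin n),
          PiTensorProduct.reindex ℂ (fun _ : Fin n => A) σ (r • PiTensorProduct.tprod ℂ f))
          = r • ∑ σ : Equiv.Perm (Fin n),
              PiTensorProduct.tprod ℂ (fun i => f (σ.symm i)) := by
        rw [Finset.smul_sum]
        exact Finset.sum_congr rfl fun σ _ => by
          rw [map_smul, PiTensorProduct.reindex_tprod]
      rw [this, sym_eq_auxT]
      exact Subalgebra.smul_mem _ (auxT_mem n f) r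
    | add u v hu hv =>
      have : (∑ σ : Equiv.Perm (Fin n),
          PiTensorProduct.reindex ℂ (fun _ : Fin n => A) σ (u + v))
          = (∑ σ : Equiv.Perm (Fin n), PiTensorProduct.reindex ℂ (fun _ : Fin n => A) σ u)
            + ∑ σ : Equiv.Perm (Fin n), PiTensorProduct.reindex ℂ (fun _ : Fin n => A) σ v := by
        rw [← Finset.sum_add_distrib]
        exact Finset.sum_congr rfl fun σ _ => map_add _ _ _
      rw [this]
      exact add_mem hu hv
  have havg : ((n.factorial : ℂ)) • x
      = ∑ σ : Equiv.Perm (Fin n), PiTensorProduct.reindex ℂ (fun _ : Fin n => A) σ x := by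
    simp only [hx, Finset.sum_const, Finset.card_univ, Fintype.card_perm, Fintype.card_fin]
    rw [← Nat.cast_smul_eq_nsmul ℂ]
  have hne : (n.factorial : ℂ) ≠ 0 := Nat.cast_ne_zero.mpr n.factorial_ne_zero
  have : x = ((n.factorial : ℂ))⁻¹ • ((n.factorial : ℂ) • x) := by
    rw [smul_smul, inv_mul_cancel₀ hne, one_smul]
  rw [this, havg]
  exact Subalgebra.smul_mem _ (sum_mem x) _
end

section
/- Let m ≥ 1, and let λ, ν ∈ ℂ be such that λ + pν ≠ 0 for all integers p with |p| ≤ m − 1. Then the element λ·1 + ν·(s_{12} + s_{13} + ⋯ + s_{1m}) is invertible in the group algebra ℂ[S_m]. -/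
/-!
Write `X i = ∑_{j > i} (i j)` in `K[S_{n+1}]`, so that the element of the theorem is
`λ + ν X 0`. These Jucys–Murphy elements (for the reversed order) pairwise commute, and with
`s = (i i+1)` they satisfy `X i = s X (i+1) s + s`. Following Okounkov–Vershik, let `v` be a common
eigenvector of `X i, X (i+1), …`. Either the eigenvalues of `X i` and `X (i+1)` on `v` differ by
at most `1` (as they must when `s v` is proportional to `v`), or some `s v + c v ≠ 0` is a common
eigenvector of `X (i+1), X (i+2), …` on which `X (i+1)` takes the eigenvalue that `X i` takes on
`v`. By downward induction, these eigenvalues are integers of absolute value at most `#{j > i}`.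
Commuting operators on a finite-dimensional space have a common eigenvector inside any eigenspace
of one of them, so this bounds every eigenvalue of `X 0`. Finally, if `λ + ν X 0` were not a unit
of the finite-dimensional algebra, it would kill some `v ≠ 0`, and `-λ/ν` would be such an
eigenvalue.
-/

open Finset Equiv MonoidAlgebra

section SwapSum

variable (k : Type*) [Semiring k] {α : Type*} [DecidableEq α]

noncomputable def swapSum (a : α) (S : Finset α) : MonoidAlgebra k (Perm α) :=
  ∑ b ∈ S, of k (Perm α) (swap a b)

variable {k}

lemma swap_apply_mem_iff {S : Finset α} {c d : α} (h : c ∈ S ↔ d ∈ S) (x : α) :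
    swap c d x ∈ S ↔ x ∈ S := by
  rcases eq_or_ne x c with rfl | hc
  · simp [h]
  rcases eq_or_ne x d with rfl | hd
  · simp [h]
  rw [swap_apply_of_ne_of_ne hc hd]

lemma of_mul_swapSum {σ : Perm α} {S : Finset α} (hS : ∀ x, σ x ∈ S ↔ x ∈ S) (a : α) :
    of k _ σ * swapSum k a S = swapSum k (σ a) S * of k _ σ := by
  rw [swapSum, swapSum, mul_sum, sum_mul]
  refine sum_equiv σ (fun x => (hS x).symm) fun x _ => ?_
  rw [← map_mul, ← map_mul, mul_swap_eq_swap_mul]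

lemma commute_of_swapSum {σ : Perm α} {S : Finset α} {a : α} (ha : σ a = a)
    (hS : ∀ x, σ x ∈ S ↔ x ∈ S) : Commute (of k _ σ) (swapSum k a S) := by
  have h := of_mul_swapSum (k := k) hS a
  rw [ha] at h
  exact h

lemma swapSum_commute {a b : α} {S T : Finset α} (hab : a ≠ b) (haT : a ∉ T) (hbS : b ∈ S)
    (hTS : T ⊆ S) : Commute (swapSum k a S) (swapSum k b T) :=
  Commute.sum_right _ _ _ fun _ hc =>
    (commute_of_swapSum (swap_apply_of_ne_of_ne hab (ne_of_mem_of_not_mem hc haT).symm)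
      (swap_apply_mem_iff (iff_of_true hbS (hTS hc)))).symm

lemma swapSum_insert {S : Finset α} {c d : α} (hc : c ∉ S) (hd : d ∉ S) :
    swapSum k c (insert d S) =
      of k _ (swap c d) * swapSum k d S * of k _ (swap c d) + of k _ (swap c d) := by
  rw [of_mul_swapSum (swap_apply_mem_iff (iff_of_false hc hd)), swap_apply_right, mul_assoc,
    ← map_mul, swap_mul_self, map_one, mul_one, swapSum, swapSum, sum_insert hd, add_comm]

end SwapSum

section JucysMurphy

variable (k : Type*) [Semiring k] {n : ℕ}

noncomputable def jucysMurphy (i : Fin (n + 1)) : MonoidAlgebra k (Perm (Fin (n + 1))) :=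
  swapSum k i (Ioi i)

lemma jucysMurphy_last : jucysMurphy k (Fin.last n) = 0 := by
  rw [jucysMurphy, swapSum, Ioi_eq_empty.mpr fun x _ => Fin.le_last x, sum_empty]

lemma jucysMurphy_castSucc (i : Fin n) :
    jucysMurphy k i.castSucc = of k _ (swap i.castSucc i.succ) * jucysMurphy k i.succ *
      of k _ (swap i.castSucc i.succ) + of k _ (swap i.castSucc i.succ) := by
  have hIoi : Ioi i.castSucc = insert i.succ (Ioi i.succ) := by
    ext x
    simp only [mem_Ioi, mem_insert, Fin.lt_def, Fin.ext_iff, Fin.val_castSucc, Fin.val_succ]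
    omega
  rw [jucysMurphy, hIoi, swapSum_insert (by simp [Fin.castSucc_lt_succ.le]) notMem_Ioi_self]
  rfl

lemma jucysMurphy_commute (i j : Fin (n + 1)) : Commute (jucysMurphy k i) (jucysMurphy k j) := by
  have key : ∀ i j : Fin (n + 1), i < j → Commute (jucysMurphy k i) (jucysMurphy k j) :=
    fun i j hij => swapSum_commute hij.ne (by simp [hij.le]) (mem_Ioi.mpr hij)
      (Ioi_subset_Ioi hij.le)
  rcases lt_trichotomy i j with hij | rfl | hij
  · exact key i j hij
  · exact Commute.refl _
  · exact (key j i hij).symm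

lemma commute_swap_jucysMurphy {i : Fin n} {j : Fin (n + 1)} (hij : i.succ < j) :
    Commute (of k _ (swap i.castSucc i.succ)) (jucysMurphy k j) :=
  commute_of_swapSum
    (swap_apply_of_ne_of_ne (Fin.castSucc_lt_succ.trans hij).ne' hij.ne')
    (swap_apply_mem_iff (iff_of_false (by simp [(Fin.castSucc_lt_succ.trans hij).le])
      (by simp [hij.le])))

end JucysMurphy

theorem eigenvalue_shift_or_exists_eigenvector {K A V : Type*} [Field K] [Ring A] [Algebra K A]
    [AddCommGroup V] [Module A V] [Module K V] [IsScalarTower K A V] {s X Y : A}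
    (hs : s * s = 1) (hX : X = s * Y * s + s) {v : V} (hv : v ≠ 0) {a b : K}
    (ha : X • v = a • v) (hb : Y • v = b • v) :
    (∃ e : ℤ, |e| ≤ 1 ∧ a = b + e) ∨
      ∃ c : K, s • v + c • v ≠ 0 ∧ Y • (s • v + c • v) = a • (s • v + c • v) := by
  have hsX : Y * s = s * X - 1 := by
    rw [hX, mul_add, ← mul_assoc, ← mul_assoc, hs, one_mul, add_sub_cancel_right]
  have hYs : Y • s • v = a • s • v - v := by
    rw [smul_smul, hsX, sub_smul, one_smul, mul_smul, ha, smul_comm]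
  have hinj : Function.Injective fun c : K => c • v := smul_left_injective K hv
  by_cases hpar : ∃ c : K, s • v = c • v
  · obtain ⟨c, hc⟩ := hpar
    have hcc : c * c = 1 := hinj <| show (c * c) • v = (1 : K) • v by
      rw [mul_smul, ← hc, smul_comm, ← hc, smul_smul, hs, one_smul, one_smul]
    have hcb : c * b = a * c - 1 := hinj <| show (c * b) • v = (a * c - 1) • v by
      calc (c * b) • v = Y • s • v := by rw [mul_smul, ← hb, hc, smul_comm]
        _ = (a * c - 1) • v := by rw [hYs, hc, sub_smul, mul_smul, one_smul]
    left
    rcases mul_self_eq_one_iff.mp hcc with rfl | rfl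
    · exact ⟨1, by simp, by push_cast; linear_combination -hcb⟩
    · exact ⟨-1, by simp, by push_cast; linear_combination hcb⟩
  by_cases hab : a = b
  · exact Or.inl ⟨0, by simp, by simp [hab]⟩
  refine Or.inr ⟨(b - a)⁻¹, fun h0 =>
    hpar ⟨-(b - a)⁻¹, by rw [neg_smul]; exact eq_neg_of_add_eq_zero_left h0⟩, ?_⟩
  have hba : b - a ≠ 0 := sub_ne_zero.mpr (Ne.symm hab)
  have hcoeff : (b - a)⁻¹ * b = a * (b - a)⁻¹ + 1 := by field_simp; ring
  rw [smul_add, hYs, smul_comm Y _ v, hb, smul_smul, hcoeff, smul_add, smul_smul, add_smul,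
    one_smul]
  abel

theorem Module.End.exists_mem_common_eigenvector {K V ι : Type*} [Field K] [IsAlgClosed K]
    [AddCommGroup V] [Module K V] [FiniteDimensional K V] (f : ι → Module.End K V)
    (hf : ∀ i j, Commute (f i) (f j)) (s : Finset ι) {p : Submodule K V} (hp : p ≠ ⊥)
    (hfp : ∀ i, Set.MapsTo (f i) p p) : ∃ v ∈ p, v ≠ 0 ∧ ∀ i ∈ s, ∃ μ : K, f i v = μ • v := by
  classical
  induction s using Finset.induction_on generalizing p with
  | empty =>
    obtain ⟨v, hv, hv0⟩ := Submodule.exists_mem_ne_zero_of_ne_bot hp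
    exact ⟨v, hv, hv0, by simp⟩
  | insert i s _ ih =>
    have : Nontrivial p := Submodule.nontrivial_iff_ne_bot.mpr hp
    obtain ⟨μ, hμ⟩ := Module.End.exists_eigenvalue ((f i).restrict (hfp i))
    obtain ⟨x, hx⟩ := hμ.exists_hasEigenvector
    have hq : p ⊓ (f i).eigenspace μ ≠ ⊥ := by
      refine (Submodule.ne_bot_iff _).mpr ⟨x, ⟨x.2, ?_⟩, fun h => hx.2 (Subtype.ext h)⟩
      exact Module.End.mem_eigenspace_iff.mpr (congrArg Subtype.val hx.apply_eq_smul)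
    obtain ⟨v, ⟨hvp, hvμ⟩, hv0, hvs⟩ :=
      ih hq fun j => (hfp j).inter_inter (Module.End.mapsTo_genEigenspace_of_comm (hf i j) μ 1)
    refine ⟨v, hvp, hv0, fun j hj => ?_⟩
    rcases mem_insert.mp hj with rfl | hj
    · exact ⟨μ, Module.End.mem_eigenspace_iff.mp hvμ⟩
    · exact hvs j hj

section JucysMurphyEigenvalue

variable {K V : Type*} [Field K] {n : ℕ} [AddCommGroup V]
  [Module (MonoidAlgebra K (Perm (Fin (n + 1)))) V] [Module K V]
  [IsScalarTower K (MonoidAlgebra K (Perm (Fin (n + 1)))) V]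

theorem jucysMurphy_eigenvalue_of_forall_le (i : Fin (n + 1)) {v : V} (hv : v ≠ 0)
    (hcommon : ∀ j, i ≤ j → ∃ μ : K, jucysMurphy K j • v = μ • v) {a : K}
    (ha : jucysMurphy K i • v = a • v) : ∃ p : ℤ, |p| ≤ #(Ioi i) ∧ a = p := by
  induction i using Fin.reverseInduction generalizing v a with
  | last =>
    rw [jucysMurphy_last, zero_smul, eq_comm, smul_eq_zero] at ha
    exact ⟨0, by simp, by simpa [hv] using ha⟩
  | cast i ih =>
    have hcard : #(Ioi i.castSucc) = #(Ioi i.succ) + 1 := by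
      simp only [Fin.card_Ioi, Fin.val_castSucc, Fin.val_succ]
      omega
    set s := of K _ (swap i.castSucc i.succ)
    have hs : s * s = 1 := by rw [← map_mul, swap_mul_self, map_one]
    obtain ⟨b, hb⟩ := hcommon i.succ Fin.castSucc_lt_succ.le
    rcases eigenvalue_shift_or_exists_eigenvector hs (jucysMurphy_castSucc K i) hv ha hb with
      ⟨e, he, rfl⟩ | ⟨c, hw, hY⟩
    · obtain ⟨p, hp, rfl⟩ := ih hv (fun j hj => hcommon j (Fin.castSucc_lt_succ.le.trans hj)) hb
      refine ⟨p + e, ?_, by push_cast; rfl⟩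
      rw [hcard]
      push_cast
      linarith [abs_add_le p e]
    · have hcommon' : ∀ j, i.succ ≤ j →
          ∃ μ : K, jucysMurphy K j • (s • v + c • v) = μ • (s • v + c • v) := by
        intro j hj
        rcases hj.eq_or_lt with rfl | hj
        · exact ⟨a, hY⟩
        obtain ⟨μ, hμ⟩ := hcommon j (Fin.castSucc_lt_succ.trans hj).le
        refine ⟨μ, ?_⟩
        rw [smul_add, smul_comm _ c v, hμ, smul_smul (jucysMurphy K j) s v,
          ← (commute_swap_jucysMurphy K hj).eq, mul_smul, hμ, smul_comm s μ v, smul_add,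
          smul_comm c μ v]
      obtain ⟨p, hp, rfl⟩ := ih hw hcommon' hY
      exact ⟨p, by rw [hcard]; push_cast; linarith, rfl⟩

theorem jucysMurphy_eigenvalue [IsAlgClosed K] [FiniteDimensional K V] (i : Fin (n + 1)) {v : V}
    (hv : v ≠ 0) {a : K} (ha : jucysMurphy K i • v = a • v) : ∃ p : ℤ, |p| ≤ #(Ioi i) ∧ a = p := by
  let f : Fin (n + 1) → Module.End K V := fun j => Module.toModuleEnd K V (jucysMurphy K j)
  have hf : ∀ j l, Commute (f j) (f l) := fun j l => (jucysMurphy_commute K j l).map _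
  obtain ⟨w, hw, hw0, hcommon⟩ := Module.End.exists_mem_common_eigenvector f hf univ
    ((Submodule.ne_bot_iff _).mpr ⟨v, Module.End.mem_eigenspace_iff.mpr ha, hv⟩)
    fun j => Module.End.mapsTo_genEigenspace_of_comm (hf i j) a 1
  exact jucysMurphy_eigenvalue_of_forall_le i hw0 (fun j _ => hcommon j (mem_univ j))
    (Module.End.mem_eigenspace_iff.mp hw)

end JucysMurphyEigenvalue

/-- Invertibility of `λ·1 + ν·(s₁₂ + ⋯ + s₁ₘ)` in `ℂ[S_m]` when `λ + pν ≠ 0` for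
all integers `p` with `|p| ≤ m − 1`.  (Here the symmetric group has `m + 1 ≥ 1`
letters, so the paper's `m` is `m + 1` and the bound `m − 1` becomes `m`.) -/
theorem jucys_murphy_invertible (m : ℕ) (lam nu : ℂ)
    (h : ∀ p : ℤ, |p| ≤ (m : ℤ) → lam + (p : ℂ) * nu ≠ 0) :
    IsUnit (lam • (1 : MonoidAlgebra ℂ (Equiv.Perm (Fin (m + 1)))) +
      nu • ∑ ℓ ∈ Finset.univ.erase (0 : Fin (m + 1)),
        MonoidAlgebra.of ℂ (Equiv.Perm (Fin (m + 1))) (Equiv.swap 0 ℓ)) := by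
  have hIoi : Ioi (0 : Fin (m + 1)) = univ.erase 0 := by
    ext x
    simp
  rw [← hIoi, ← swapSum, ← jucysMurphy, IsArtinianRing.isUnit_iff_isLeftRegular,
    isLeftRegular_iff_right_eq_zero_of_mul]
  intro v hv
  by_contra hv0
  rw [add_mul, smul_mul_assoc, smul_mul_assoc, one_mul] at hv
  have hnu : nu ≠ 0 := by
    rintro rfl
    exact h 0 (by simp) (by simpa [hv0] using hv)
  have hJv : jucysMurphy ℂ (0 : Fin (m + 1)) • v = (-lam / nu) • v := by
    rw [smul_eq_mul, ← smul_right_inj hnu, smul_smul, mul_div_cancel₀ _ hnu,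
      eq_neg_of_add_eq_zero_right hv, neg_smul]
  obtain ⟨p, hp, hlam⟩ := jucysMurphy_eigenvalue 0 hv0 hJv
  refine h p (by simpa using hp) ?_
  rw [← hlam]
  field_simp
  ring
end

section
/- Let R be a commutative ring, X, Y ∈ Mat_n(R), a, b ∈ R, and set Z = aX + bY. Then for every m ≥ 0, Tr(Z^m (XY − YX)) = 0. -/
open Matrix Polynomial

/-- Key identity: `c • (XY - YX) = ZY - YZ` where `Z = c•X + d•Y`, so
`c * Tr(Z^m (XY - YX)) = Tr(Z^(m+1) Y) - Tr(Z^(m+1) Y) = 0`. -/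
lemma aux_smul_trace_commutator {S : Type*} [CommRing S] {n : ℕ}
    (X Y : Matrix (Fin n) (Fin n) S) (c d : S) (m : ℕ) :
    c * Matrix.trace ((c • X + d • Y) ^ m * (X * Y - Y * X)) = 0 := by
  set Z := c • X + d • Y with hZ
  have h1 : c • (X * Y - Y * X) = Z * Y - Y * Z := by
    rw [hZ]
    simp only [add_mul, mul_add, smul_mul_assoc, mul_smul_comm, smul_sub]
    abel
  calc c * Matrix.trace (Z ^ m * (X * Y - Y * X))
      = Matrix.trace (Z ^ m * (c • (X * Y - Y * X))) := by
        rw [Matrix.mul_smul, Matrix.trace_smul, smul_eq_mul]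
    _ = Matrix.trace (Z ^ m * (Z * Y)) - Matrix.trace (Z ^ m * (Y * Z)) := by
        rw [h1, Matrix.mul_sub, Matrix.trace_sub]
    _ = 0 := by
        rw [← mul_assoc, ← pow_succ, ← mul_assoc,
          Matrix.trace_mul_comm (Z ^ m * Y) Z, ← mul_assoc, ← pow_succ', sub_self]

/-- For matrices `X, Y` over a commutative ring, scalars `a, b`, and
`Z = aX + bY`, the trace `Tr(Z^m (XY − YX))` vanishes for every `m ≥ 0`. -/
theorem trace_power_commutator_eq_zero
    {R : Type*} [CommRing R] {n : ℕ}
    (X Y : Matrix (Fin n) (Fin n) R) (a b : R) (m : ℕ) :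
    Matrix.trace ((a • X + b • Y) ^ m * (X * Y - Y * X)) = 0 := by
  -- Work over `P = R[v][u]`
  set ι : R →+* Polynomial (Polynomial R) := Polynomial.C.comp Polynomial.C with hι
  set φ : Polynomial (Polynomial R) →+* R :=
    (Polynomial.evalRingHom a).comp (Polynomial.mapRingHom (Polynomial.evalRingHom b)) with hφ
  set X' := X.map ι with hX'
  set Y' := Y.map ι with hY'
  set u : Polynomial (Polynomial R) := Polynomial.X with hu
  set v : Polynomial (Polynomial R) := Polynomial.C Polynomial.X with hv
  set T := Matrix.trace ((u • X' + v • Y') ^ m * (X' * Y' - Y' * X')) with hT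
  have huT : u * T = 0 := aux_smul_trace_commutator X' Y' u v m
  have hT0 : T = 0 := by
    refine Polynomial.ext fun k => ?_
    have := congrArg (fun p => Polynomial.coeff p (k + 1)) huT
    simpa [hu, Polynomial.coeff_X_mul] using this
  -- transfer via φ
  have hφι : ∀ r : R, φ (ι r) = r := by
    intro r; simp [hφ, hι]
  have hmap : (φ : Polynomial (Polynomial R) →+* R).mapMatrix ((u • X' + v • Y') ^ m * (X' * Y' - Y' * X'))
      = (a • X + b • Y) ^ m * (X * Y - Y * X) := by
    have hXm : φ.mapMatrix X' = X := by
      ext i j; simp [hX', RingHom.mapMatrix_apply, Matrix.map_apply, hφι]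
    have hYm : φ.mapMatrix Y' = Y := by
      ext i j; simp [hY', RingHom.mapMatrix_apply, Matrix.map_apply, hφι]
    have h1 : ∀ r : R, φ (Polynomial.C (Polynomial.C r)) = r := hφι
    have h2 : φ Polynomial.X = a := by simp [hφ]
    have h3 : φ (Polynomial.C Polynomial.X) = b := by simp [hφ]
    have hZm : φ.mapMatrix (u • X' + v • Y') = a • X + b • Y := by
      ext i j
      simp only [RingHom.mapMatrix_apply, Matrix.map_apply, hX', hY', hι, hu, hv,
        Matrix.add_apply, Matrix.smul_apply, smul_eq_mul, map_add, _root_.map_mul,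
        RingHom.coe_comp, Function.comp_apply, h1, h2, h3]
    rw [RingHom.map_mul, RingHom.map_pow, RingHom.map_sub, RingHom.map_mul,
      RingHom.map_mul, hXm, hYm, hZm]
  have htr : ∀ M : Matrix (Fin n) (Fin n) (Polynomial (Polynomial R)),
      Matrix.trace (φ.mapMatrix M) = φ (Matrix.trace M) := by
    intro M
    simp [RingHom.mapMatrix_apply, Matrix.trace, Matrix.diag, Matrix.map_apply, map_sum]
  rw [← hmap, htr, ← hT, hT0, map_zero]
end

section
/- Let l ≥ 1, let ε be a primitive l-th root of unity in ℂ, and let q be an integer with ε^{2q} ≠ 1. Let z ∈ ℂ be such that z ≠ ε^{2m} for every integer m. Then Σ_{p=0}^{l-1} 1/((ε^{-p} − ε^{p} z)(ε^{q-p} − ε^{p-q} z)) = 0. -/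
private lemma sum_range_eq_sum_zmod' {l : ℕ} [NeZero l] (f : ZMod l → ℂ) :
    ∑ p ∈ Finset.range l, f (p : ZMod l) = ∑ x : ZMod l, f x := by
  refine Finset.sum_nbij' (fun p => (p : ZMod l)) (fun x => x.val) ?_ ?_ ?_ ?_ ?_
  · intro a _; exact Finset.mem_univ _
  · intro x _; exact Finset.mem_range.2 (ZMod.val_lt x)
  · intro a ha; exact ZMod.val_natCast_of_lt (Finset.mem_range.1 ha)
  · intro x _; simp [ZMod.natCast_val, ZMod.cast_id]
  · intro a _; rfl

private lemma partial_fraction_core (a b u v : ℂ) (ha : a ≠ 0)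
    (hu : u ≠ 0) (hv : v ≠ 0) (hw : v - u ≠ 0) :
    ((-(a⁻¹) * v) * (-(a * b⁻¹) * ((a⁻¹) ^ 2 * u)))⁻¹ =
      (b⁻¹ * (v - u))⁻¹ * (((a⁻¹) ^ 2 * u)⁻¹ - ((a⁻¹) ^ 2 * v)⁻¹) := by
  field_simp

private lemma partial_fraction_aux (a b z : ℂ) (ha : a ≠ 0) (hb : b ≠ 0)
    (hE : a ^ 2 * z - b ^ 2 ≠ 0) (hF : a ^ 2 * z - 1 ≠ 0) (hD : b ^ 2 - 1 ≠ 0) :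
    ((a⁻¹ - a * z) * (b * a⁻¹ - a * b⁻¹ * z))⁻¹ =
      (b - b⁻¹)⁻¹ * ((z - b * a⁻¹ * (b * a⁻¹))⁻¹ - (z - a⁻¹ * a⁻¹)⁻¹) := by
  have h1 : a⁻¹ - a * z = -(a⁻¹) * (a ^ 2 * z - 1) := by field_simp; ring
  have h2 : b * a⁻¹ - a * b⁻¹ * z = -(a * b⁻¹) * ((a⁻¹) ^ 2 * (a ^ 2 * z - b ^ 2)) := by
    field_simp; ring
  have h3 : z - b * a⁻¹ * (b * a⁻¹) = (a⁻¹) ^ 2 * (a ^ 2 * z - b ^ 2) := by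
    field_simp
  have h4 : z - a⁻¹ * a⁻¹ = (a⁻¹) ^ 2 * (a ^ 2 * z - 1) := by field_simp
  have h5 : b - b⁻¹ = b⁻¹ * ((a ^ 2 * z - 1) - (a ^ 2 * z - b ^ 2)) := by
    field_simp; ring
  have hw : (a ^ 2 * z - 1) - (a ^ 2 * z - b ^ 2) ≠ 0 := by
    intro h; apply hD; rw [← h]; ring
  rw [h1, h2, h3, h4, h5]
  exact partial_fraction_core a b _ _ ha hE hF hw

/-- For a primitive `l`-th root of unity `ε`, an integer `q` with `ε^{2q} ≠ 1`,
and `z ∈ ℂ` with `z ≠ ε^{2m}` for every integer `m`: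
`Σ_{p=0}^{l-1} 1/((ε^{-p} − ε^{p} z)(ε^{q-p} − ε^{p-q} z)) = 0`. -/
theorem root_of_unity_sum_vanishes
    (l : ℕ) (hl : 1 ≤ l) (ε : ℂ) (hε : IsPrimitiveRoot ε l)
    (q : ℤ) (hq : ε ^ (2 * q) ≠ 1)
    (z : ℂ) (hz : ∀ m : ℤ, z ≠ ε ^ (2 * m)) :
    ∑ p ∈ Finset.range l,
      ((ε ^ (-(p : ℤ)) - ε ^ (p : ℤ) * z) *
        (ε ^ (q - (p : ℤ)) - ε ^ ((p : ℤ) - q) * z))⁻¹ = 0 := by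
  haveI : NeZero l := ⟨by omega⟩
  have hε0 : ε ≠ 0 := hε.ne_zero (by omega)
  have hper : ∀ a b : ℤ, (a : ZMod l) = (b : ZMod l) → ε ^ a = ε ^ b := by
    intro a b hab
    have hdvd : (l : ℤ) ∣ a - b := by
      rwa [← ZMod.intCast_zmod_eq_zero_iff_dvd, Int.cast_sub, sub_eq_zero]
    have h1 : ε ^ (a - b) = 1 := (hε.zpow_eq_one_iff_dvd _).2 hdvd
    calc ε ^ a = ε ^ (b + (a - b)) := by ring_nf
    _ = ε ^ b * ε ^ (a - b) := zpow_add₀ hε0 _ _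
    _ = ε ^ b := by rw [h1, mul_one]
  have sq_eq : ∀ m : ℤ, (ε ^ m) ^ 2 = ε ^ (2 * m) := by
    intro m; rw [sq, ← zpow_add₀ hε0, two_mul]
  set G : ZMod l → ℂ := fun x => (z - ε ^ (2 * (x.val : ℤ)))⁻¹ with hG
  have hGval : ∀ m : ℤ, G ((m : ZMod l)) = (z - ε ^ (2 * m))⁻¹ := by
    intro m
    have h : ε ^ (2 * (((m : ZMod l)).val : ℤ)) = ε ^ (2 * m) := by
      apply hper
      push_cast
      simp [ZMod.natCast_val, ZMod.cast_id]
    simp only [hG, h]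
  have key : ∀ p : ℤ,
      ((ε ^ (-p) - ε ^ p * z) * (ε ^ (q - p) - ε ^ (p - q) * z))⁻¹ =
        (ε ^ q - ε ^ (-q))⁻¹ *
          ((z - ε ^ (2 * (q - p)))⁻¹ - (z - ε ^ (2 * (-p)))⁻¹) := by
    intro p
    have ha : ε ^ p ≠ 0 := zpow_ne_zero _ hε0
    have hb : ε ^ q ≠ 0 := zpow_ne_zero _ hε0
    have hE : (ε ^ p) ^ 2 * z - (ε ^ q) ^ 2 ≠ 0 := by
      have heq : (ε ^ p) ^ 2 * z - (ε ^ q) ^ 2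
          = ε ^ (2 * p) * (z - ε ^ (2 * (q - p))) := by
        rw [sq_eq, sq_eq, mul_sub, ← zpow_add₀ hε0,
          show 2 * p + 2 * (q - p) = 2 * q by ring]
      rw [heq]
      exact mul_ne_zero (zpow_ne_zero _ hε0) (sub_ne_zero.2 (hz _))
    have hF : (ε ^ p) ^ 2 * z - 1 ≠ 0 := by
      have heq : (ε ^ p) ^ 2 * z - 1 = ε ^ (2 * p) * (z - ε ^ (2 * (-p))) := by
        rw [sq_eq, mul_sub, ← zpow_add₀ hε0,
          show 2 * p + 2 * (-p) = 0 by ring, zpow_zero]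
      rw [heq]
      exact mul_ne_zero (zpow_ne_zero _ hε0) (sub_ne_zero.2 (hz _))
    have hD : (ε ^ q) ^ 2 - 1 ≠ 0 := by rw [sq_eq]; exact sub_ne_zero.2 hq
    have e1 : ε ^ (-p) = (ε ^ p)⁻¹ := zpow_neg ε p
    have e2 : ε ^ (q - p) = ε ^ q * (ε ^ p)⁻¹ := by
      rw [zpow_sub₀ hε0, div_eq_mul_inv]
    have e3 : ε ^ (p - q) = ε ^ p * (ε ^ q)⁻¹ := by
      rw [zpow_sub₀ hε0, div_eq_mul_inv]
    have e4 : ε ^ (2 * (q - p)) = ε ^ (q - p) * ε ^ (q - p) := by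
      rw [two_mul, zpow_add₀ hε0]
    have e5 : ε ^ (2 * (-p)) = ε ^ (-p) * ε ^ (-p) := by
      rw [two_mul, zpow_add₀ hε0]
    have e6 : ε ^ (-q) = (ε ^ q)⁻¹ := zpow_neg ε q
    rw [e4, e5, e2, e3, e1, e6]
    exact partial_fraction_aux _ _ _ ha hb hE hF hD
  calc ∑ p ∈ Finset.range l,
      ((ε ^ (-(p : ℤ)) - ε ^ (p : ℤ) * z) *
        (ε ^ (q - (p : ℤ)) - ε ^ ((p : ℤ) - q) * z))⁻¹
      = ∑ p ∈ Finset.range l, (ε ^ q - ε ^ (-q))⁻¹ *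
          ((z - ε ^ (2 * (q - (p : ℤ))))⁻¹ - (z - ε ^ (2 * (-(p : ℤ))))⁻¹) :=
        Finset.sum_congr rfl fun p _ => key p
    _ = (ε ^ q - ε ^ (-q))⁻¹ *
          ((∑ p ∈ Finset.range l, (z - ε ^ (2 * (q - (p : ℤ))))⁻¹) -
           (∑ p ∈ Finset.range l, (z - ε ^ (2 * (-(p : ℤ))))⁻¹)) := by
        rw [← Finset.mul_sum, Finset.sum_sub_distrib]
    _ = 0 := by
        have hS1 : ∑ p ∈ Finset.range l, (z - ε ^ (2 * (q - (p : ℤ))))⁻¹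
            = ∑ x : ZMod l, G x := by
          calc ∑ p ∈ Finset.range l, (z - ε ^ (2 * (q - (p : ℤ))))⁻¹
              = ∑ p ∈ Finset.range l, G ((q : ZMod l) - (p : ZMod l)) := by
                refine Finset.sum_congr rfl fun p _ => ?_
                rw [show (q : ZMod l) - (p : ZMod l) = ((q - (p : ℤ) : ℤ) : ZMod l) by
                  push_cast; ring, hGval]
            _ = ∑ x : ZMod l, G ((q : ZMod l) - x) :=
                sum_range_eq_sum_zmod' (fun x => G ((q : ZMod l) - x))
            _ = ∑ x : ZMod l, G x :=
                Fintype.sum_equiv (Equiv.subLeft (q : ZMod l)) _ G (fun x => rfl)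
        have hS2 : ∑ p ∈ Finset.range l, (z - ε ^ (2 * (-(p : ℤ))))⁻¹
            = ∑ x : ZMod l, G x := by
          calc ∑ p ∈ Finset.range l, (z - ε ^ (2 * (-(p : ℤ))))⁻¹
              = ∑ p ∈ Finset.range l, G (-(p : ZMod l)) := by
                refine Finset.sum_congr rfl fun p _ => ?_
                rw [show -(p : ZMod l) = ((-(p : ℤ) : ℤ) : ZMod l) by push_cast; ring,
                  hGval]
            _ = ∑ x : ZMod l, G (-x) :=
                sum_range_eq_sum_zmod' (fun x => G (-x))
            _ = ∑ x : ZMod l, G x :=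
                Fintype.sum_equiv (Equiv.neg (ZMod l)) _ G (fun x => rfl)
        rw [hS1, hS2, sub_self, mul_zero]
end
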